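/- Let U ⊆ ℝ² be open, Γ a torsion-free affine connection on U, and K = Σ_i K^i ∂_{x^i} any smooth vector field on U with complete lift K̃ = Σ_i K^i ∂_{x^i} − Σ_{i,j} ξ_j (∂_i K^j) ∂_{ξ_i} on U×ℝ². Let g_W be the Walker metric of Γ on U×ℝ². Then the Lie derivative ℒ_{K̃} g_W has components (ℒ_{K̃} g_W)(∂_{x^i},∂_{x^j}) = −Σ_k ξ_k (ℒ_K Γ)^k_{ij}, while all components of ℒ_{K̃} g_W with at least one argument among ∂_{ξ_1}, ∂_{ξ_2} vanish identically. (This is the formula ℒ_{K̃} g = −ξ_k ℒ_K(Γ^k_{ij}) dx^i ⊙ dx^j.) -/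

import Mathlib

noncomputable section
open Matrix

/-- Points of the plane. -/
abbrev Pt2 : Type := Fin 2 → ℝ
/-- Points of the 4-manifold `U × ℝ²`, coordinates `(x¹, x², ξ₁, ξ₂)`. -/
abbrev Pt4 : Type := Fin 4 → ℝ

/-- Partial derivative of a function on the plane. -/
def pd2 (i : Fin 2) (f : Pt2 → ℝ) (x : Pt2) : ℝ := fderiv ℝ f x (Pi.single i 1)
/-- Partial derivative of a function on `ℝ⁴`. -/
def pd4 (a : Fin 4) (f : Pt4 → ℝ) (p : Pt4) : ℝ := fderiv ℝ f p (Pi.single a 1)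

/-- Base point `(x¹,x²)` of a point of `U × ℝ²`. -/
def bpt (p : Pt4) : Pt2 := ![p 0, p 1]
/-- Fibre coordinates `(ξ₁,ξ₂)` of a point of `U × ℝ²`. -/
def fib (p : Pt4) : Fin 2 → ℝ := ![p 2, p 3]

/-- An affine connection: `conn k i j` is the Christoffel symbol `Γ^k_{ij}`. -/
abbrev Conn : Type := Fin 2 → Fin 2 → Fin 2 → Pt2 → ℝ

/-- The Walker metric `g_W = dξ_i⊙dx^i − Γ^k_{ij}ξ_k dx^i⊙dx^j` of a connection, as a
symmetric `4×4` matrix in the coordinates `(x¹,x²,ξ₁,ξ₂)`. -/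
def walker (Γ : Conn) (p : Pt4) : Matrix (Fin 4) (Fin 4) ℝ :=
  let A : Fin 2 → Fin 2 → ℝ := fun i j => -(∑ k, Γ k i j (bpt p) * fib p k)
  !![A 0 0, A 0 1, 1/2, 0;
     A 1 0, A 1 1, 0, 1/2;
     1/2, 0, 0, 0;
     0, 1/2, 0, 0]

/-- Lie derivative `(ℒ_X T)_{ab} = Σ_c (X^c ∂_c T_{ab} + T_{cb} ∂_a X^c + T_{ac} ∂_b X^c)`
of a covariant 2-tensor on an open subset of `ℝ⁴`. -/
def lieT (X : Fin 4 → Pt4 → ℝ) (T : Pt4 → Matrix (Fin 4) (Fin 4) ℝ)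
    (a b : Fin 4) (p : Pt4) : ℝ :=
  ∑ c, (X c p * pd4 c (fun q => T q a b) p
    + T p c b * pd4 a (X c) p + T p a c * pd4 b (X c) p)

/-- Lie derivative of a connection along a vector field `K` on the plane:
`(ℒ_K Γ)^k_{ij} = ∂_i∂_j K^k + Σ_m (K^m ∂_m Γ^k_{ij} − Γ^m_{ij} ∂_m K^k
    + Γ^k_{im} ∂_j K^m + Γ^k_{jm} ∂_i K^m)`. -/
def lieConn (Γ : Conn) (K : Fin 2 → Pt2 → ℝ) (k i j : Fin 2) (x : Pt2) : ℝ :=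
  pd2 i (fun y => pd2 j (K k) y) x
    + ∑ m, (K m x * pd2 m (Γ k i j) x - Γ m i j x * pd2 m (K k) x
        + Γ k i m x * pd2 j (K m) x + Γ k j m x * pd2 i (K m) x)

/-- The complete lift `K̃ = Σ_i K^i ∂_{x^i} − Σ_{i,j} ξ_j (∂_i K^j) ∂_{ξ_i}` of a vector
field on the plane to `U × ℝ²`. -/
def completeLift (K : Fin 2 → Pt2 → ℝ) : Fin 4 → Pt4 → ℝ :=
  ![fun p => K 0 (bpt p),
    fun p => K 1 (bpt p),
    fun p => -(∑ j, fib p j * pd2 0 (K j) (bpt p)),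
    fun p => -(∑ j, fib p j * pd2 1 (K j) (bpt p))]

/-- The indices of the base coordinates `(x¹,x²)` among the four coordinates. -/
def xIdx : Fin 2 → Fin 4 := ![0, 1]
/-- The indices of the fibre coordinates `(ξ₁,ξ₂)` among the four coordinates. -/
def ξIdx : Fin 2 → Fin 4 := ![2, 3]

def bptL : Pt4 →L[ℝ] Pt2 :=
  ContinuousLinearMap.pi ![ContinuousLinearMap.proj 0, ContinuousLinearMap.proj 1]

lemma bpt_eq (p : Pt4) : bpt p = bptL p := by
  funext i; fin_cases i <;> rfl

lemma hasFDerivAt_comp_bpt {f : Pt2 → ℝ} {p : Pt4} (hf : DifferentiableAt ℝ f (bpt p)) :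
    HasFDerivAt (fun q => f (bpt q)) ((fderiv ℝ f (bpt p)).comp bptL) p := by
  have hb : HasFDerivAt bpt (bptL : Pt4 →L[ℝ] Pt2) p := by
    have := bptL.hasFDerivAt (x := p)
    apply this.congr_of_eventuallyEq
    filter_upwards with q using (bpt_eq q)
  exact hf.hasFDerivAt.comp p hb

lemma diff_comp_bpt {f : Pt2 → ℝ} {p : Pt4} (hf : DifferentiableAt ℝ f (bpt p)) :
    DifferentiableAt ℝ (fun q => f (bpt q)) p :=
  (hasFDerivAt_comp_bpt hf).differentiableAt

lemma pd4_of_hasFDerivAt {f : Pt4 → ℝ} {L : Pt4 →L[ℝ] ℝ} {p : Pt4}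
    (h : HasFDerivAt f L p) (a : Fin 4) : pd4 a f p = L (Pi.single a 1) := by
  rw [pd4, h.fderiv]

lemma bptL_single0 : bptL (Pi.single (0:Fin 4) 1) = Pi.single (0:Fin 2) 1 := by
  funext i; fin_cases i <;> simp [bptL, Pi.single_apply]
lemma bptL_single1 : bptL (Pi.single (1:Fin 4) 1) = Pi.single (1:Fin 2) 1 := by
  funext i; fin_cases i <;> simp [bptL, Pi.single_apply]
lemma bptL_single2 : bptL (Pi.single (2:Fin 4) 1) = 0 := by
  funext i; fin_cases i <;> simp [bptL, Pi.single_apply]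
lemma bptL_single3 : bptL (Pi.single (3:Fin 4) 1) = 0 := by
  funext i; fin_cases i <;> simp [bptL, Pi.single_apply]

lemma pd4_neg (f : Pt4 → ℝ) (p : Pt4) (a : Fin 4) :
    pd4 a (fun q => -f q) p = -pd4 a f p := by
  simp [pd4, fderiv_neg]

lemma pd4_add {f g : Pt4 → ℝ} {p : Pt4} (hf : DifferentiableAt ℝ f p)
    (hg : DifferentiableAt ℝ g p) (a : Fin 4) :
    pd4 a (fun q => f q + g q) p = pd4 a f p + pd4 a g p := by
  simp [pd4, fderiv_fun_add hf hg]

lemma pd4_mul {f g : Pt4 → ℝ} {p : Pt4} (hf : DifferentiableAt ℝ f p)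
    (hg : DifferentiableAt ℝ g p) (a : Fin 4) :
    pd4 a (fun q => f q * g q) p = pd4 a f p * g p + f p * pd4 a g p := by
  simp [pd4, fderiv_fun_mul hf hg]; ring

lemma pd4_const (c : ℝ) (p : Pt4) (a : Fin 4) : pd4 a (fun _ => c) p = 0 := by
  simp [pd4]

lemma pd4_coord (b : Fin 4) (p : Pt4) (a : Fin 4) :
    pd4 a (fun q => q b) p = if a = b then 1 else 0 := by
  have h : (fun q : Pt4 => q b)
      = ⇑(ContinuousLinearMap.proj (R := ℝ) (φ := fun _ : Fin 4 => ℝ) b) := rfl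
  rw [pd4, h, ContinuousLinearMap.fderiv]
  simp [Pi.single_apply, eq_comm]

lemma pd4_comp_bpt {f : Pt2 → ℝ} {p : Pt4} (hf : DifferentiableAt ℝ f (bpt p)) (a : Fin 4) :
    pd4 a (fun q => f (bpt q)) p = fderiv ℝ f (bpt p) (bptL (Pi.single a 1)) := by
  rw [pd4_of_hasFDerivAt (hasFDerivAt_comp_bpt hf)]; rfl

lemma pd4_comp_bpt0 {f : Pt2 → ℝ} {p : Pt4} (hf : DifferentiableAt ℝ f (bpt p)) :
    pd4 0 (fun q => f (bpt q)) p = pd2 0 f (bpt p) := by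
  rw [pd4_comp_bpt hf, bptL_single0]; rfl
lemma pd4_comp_bpt1 {f : Pt2 → ℝ} {p : Pt4} (hf : DifferentiableAt ℝ f (bpt p)) :
    pd4 1 (fun q => f (bpt q)) p = pd2 1 f (bpt p) := by
  rw [pd4_comp_bpt hf, bptL_single1]; rfl
lemma pd4_comp_bpt2 {f : Pt2 → ℝ} {p : Pt4} (hf : DifferentiableAt ℝ f (bpt p)) :
    pd4 2 (fun q => f (bpt q)) p = 0 := by
  rw [pd4_comp_bpt hf, bptL_single2]; simp
lemma pd4_comp_bpt3 {f : Pt2 → ℝ} {p : Pt4} (hf : DifferentiableAt ℝ f (bpt p)) :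
    pd4 3 (fun q => f (bpt q)) p = 0 := by
  rw [pd4_comp_bpt hf, bptL_single3]; simp

lemma pd2_differentiableAt {f : Pt2 → ℝ} {x : Pt2} (hf : ContDiffAt ℝ (⊤ : ℕ∞) f x) (m : Fin 2) :
    DifferentiableAt ℝ (pd2 m f) x := by
  have hd : DifferentiableAt ℝ (fderiv ℝ f) x :=
    (hf.fderiv_right (m := 1) (WithTop.coe_le_coe.mpr le_top)).differentiableAt one_ne_zero
  exact hd.clm_apply (differentiableAt_const _)

lemma pd2_pd2_symm {f : Pt2 → ℝ} {x : Pt2} (hf : ContDiffAt ℝ (⊤ : ℕ∞) f x) (i j : Fin 2) :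
    pd2 i (fun y => pd2 j f y) x = pd2 j (fun y => pd2 i f y) x := by
  have hd : DifferentiableAt ℝ (fderiv ℝ f) x :=
    (hf.fderiv_right (m := 1) (WithTop.coe_le_coe.mpr le_top)).differentiableAt one_ne_zero
  have key : ∀ v w : Pt2, fderiv ℝ (fun y => fderiv ℝ f y v) x w
      = fderiv ℝ (fderiv ℝ f) x w v := by
    intro v w
    rw [fderiv_clm_apply hd (differentiableAt_const v)]
    simp
  have hs := hf.isSymmSndFDerivAt (by simp; exact WithTop.coe_le_coe.mpr le_top)
  simp only [pd2]
  rw [key, key, hs]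

lemma diff_coord (b : Fin 4) (p : Pt4) : DifferentiableAt ℝ (fun q : Pt4 => q b) p := by
  have h : (fun q : Pt4 => q b)
      = ⇑(ContinuousLinearMap.proj (R := ℝ) (φ := fun _ : Fin 4 => ℝ) b) := rfl
  rw [h]
  exact (ContinuousLinearMap.proj (R := ℝ) (φ := fun _ : Fin 4 => ℝ) b).differentiableAt

section Entry
variable {g0 g1 : Pt2 → ℝ} {p : Pt4}

lemma pd4_entry (h0 : DifferentiableAt ℝ g0 (bpt p)) (h1 : DifferentiableAt ℝ g1 (bpt p))
    (c : Fin 4) :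
    pd4 c (fun q => -(g0 (bpt q) * q 2 + g1 (bpt q) * q 3)) p
      = -((pd4 c (fun q => g0 (bpt q)) p) * p 2 + g0 (bpt p) * (if c = 2 then 1 else 0)
          + (pd4 c (fun q => g1 (bpt q)) p) * p 3 + g1 (bpt p) * (if c = 3 then 1 else 0)) := by
  rw [pd4_neg (fun q => g0 (bpt q) * q 2 + g1 (bpt q) * q 3) p c,
    pd4_add ((diff_comp_bpt h0).fun_mul (diff_coord 2 p)) ((diff_comp_bpt h1).fun_mul (diff_coord 3 p)),
    pd4_mul (diff_comp_bpt h0) (diff_coord 2 p), pd4_mul (diff_comp_bpt h1) (diff_coord 3 p),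
    pd4_coord, pd4_coord]
  ring

lemma pd4_entry0 (h0 : DifferentiableAt ℝ g0 (bpt p)) (h1 : DifferentiableAt ℝ g1 (bpt p)) :
    pd4 0 (fun q => -(g0 (bpt q) * q 2 + g1 (bpt q) * q 3)) p
      = -(pd2 0 g0 (bpt p) * p 2 + pd2 0 g1 (bpt p) * p 3) := by
  rw [pd4_entry h0 h1, pd4_comp_bpt0 h0, pd4_comp_bpt0 h1,
    if_neg (show (0:Fin 4) ≠ 2 by decide), if_neg (show (0:Fin 4) ≠ 3 by decide)]
  ring

lemma pd4_entry1 (h0 : DifferentiableAt ℝ g0 (bpt p)) (h1 : DifferentiableAt ℝ g1 (bpt p)) :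
    pd4 1 (fun q => -(g0 (bpt q) * q 2 + g1 (bpt q) * q 3)) p
      = -(pd2 1 g0 (bpt p) * p 2 + pd2 1 g1 (bpt p) * p 3) := by
  rw [pd4_entry h0 h1, pd4_comp_bpt1 h0, pd4_comp_bpt1 h1,
    if_neg (show (1:Fin 4) ≠ 2 by decide), if_neg (show (1:Fin 4) ≠ 3 by decide)]
  ring

lemma pd4_entry2 (h0 : DifferentiableAt ℝ g0 (bpt p)) (h1 : DifferentiableAt ℝ g1 (bpt p)) :
    pd4 2 (fun q => -(g0 (bpt q) * q 2 + g1 (bpt q) * q 3)) p = -(g0 (bpt p)) := by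
  rw [pd4_entry h0 h1, pd4_comp_bpt2 h0, pd4_comp_bpt2 h1,
    if_pos rfl, if_neg (show (2:Fin 4) ≠ 3 by decide)]
  ring

lemma pd4_entry3 (h0 : DifferentiableAt ℝ g0 (bpt p)) (h1 : DifferentiableAt ℝ g1 (bpt p)) :
    pd4 3 (fun q => -(g0 (bpt q) * q 2 + g1 (bpt q) * q 3)) p = -(g1 (bpt p)) := by
  rw [pd4_entry h0 h1, pd4_comp_bpt3 h0, pd4_comp_bpt3 h1,
    if_pos rfl, if_neg (show (3:Fin 4) ≠ 2 by decide)]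
  ring

end Entry

lemma walker00 (Γ : Conn) (q : Pt4) : walker Γ q 0 0 = -(Γ 0 0 0 (bpt q) * q 2 + Γ 1 0 0 (bpt q) * q 3) := by
  simp [walker, fib, Fin.sum_univ_two]

lemma walker01 (Γ : Conn) (q : Pt4) : walker Γ q 0 1 = -(Γ 0 0 1 (bpt q) * q 2 + Γ 1 0 1 (bpt q) * q 3) := by
  simp [walker, fib, Fin.sum_univ_two]

lemma walker10 (Γ : Conn) (q : Pt4) : walker Γ q 1 0 = -(Γ 0 1 0 (bpt q) * q 2 + Γ 1 1 0 (bpt q) * q 3) := by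
  simp [walker, fib, Fin.sum_univ_two]

lemma walker11 (Γ : Conn) (q : Pt4) : walker Γ q 1 1 = -(Γ 0 1 1 (bpt q) * q 2 + Γ 1 1 1 (bpt q) * q 3) := by
  simp [walker, fib, Fin.sum_univ_two]

lemma walker02 (Γ : Conn) (q : Pt4) : walker Γ q 0 2 = 1/2 := by
  simp [walker, Matrix.vecHead, Matrix.vecTail]

lemma walker03 (Γ : Conn) (q : Pt4) : walker Γ q 0 3 = 0 := by
  simp [walker, Matrix.vecHead, Matrix.vecTail]

lemma walker12 (Γ : Conn) (q : Pt4) : walker Γ q 1 2 = 0 := by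
  simp [walker, Matrix.vecHead, Matrix.vecTail]

lemma walker13 (Γ : Conn) (q : Pt4) : walker Γ q 1 3 = 1/2 := by
  simp [walker, Matrix.vecHead, Matrix.vecTail]

lemma walker20 (Γ : Conn) (q : Pt4) : walker Γ q 2 0 = 1/2 := by
  simp [walker, Matrix.vecHead, Matrix.vecTail]

lemma walker21 (Γ : Conn) (q : Pt4) : walker Γ q 2 1 = 0 := by
  simp [walker, Matrix.vecHead, Matrix.vecTail]

lemma walker22 (Γ : Conn) (q : Pt4) : walker Γ q 2 2 = 0 := by
  simp [walker, Matrix.vecHead, Matrix.vecTail]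

lemma walker23 (Γ : Conn) (q : Pt4) : walker Γ q 2 3 = 0 := by
  simp [walker, Matrix.vecHead, Matrix.vecTail]

lemma walker30 (Γ : Conn) (q : Pt4) : walker Γ q 3 0 = 0 := by
  simp [walker, Matrix.vecHead, Matrix.vecTail]

lemma walker31 (Γ : Conn) (q : Pt4) : walker Γ q 3 1 = 1/2 := by
  simp [walker, Matrix.vecHead, Matrix.vecTail]

lemma walker32 (Γ : Conn) (q : Pt4) : walker Γ q 3 2 = 0 := by
  simp [walker, Matrix.vecHead, Matrix.vecTail]

lemma walker33 (Γ : Conn) (q : Pt4) : walker Γ q 3 3 = 0 := by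
  simp [walker, Matrix.vecHead, Matrix.vecTail]

lemma lift0 (K : Fin 2 → Pt2 → ℝ) : completeLift K 0 = fun q => K 0 (bpt q) := rfl
lemma lift1 (K : Fin 2 → Pt2 → ℝ) : completeLift K 1 = fun q => K 1 (bpt q) := rfl
lemma lift2 (K : Fin 2 → Pt2 → ℝ) : completeLift K 2
    = fun q => -(pd2 0 (K 0) (bpt q) * q 2 + pd2 0 (K 1) (bpt q) * q 3) := by
  funext q; simp [completeLift, fib, Fin.sum_univ_two]; ring
lemma lift3 (K : Fin 2 → Pt2 → ℝ) : completeLift K 3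
    = fun q => -(pd2 1 (K 0) (bpt q) * q 2 + pd2 1 (K 1) (bpt q) * q 3) := by
  funext q; simp [completeLift, fib, Fin.sum_univ_two]; ring

/-- The formula `ℒ_{K̃} g_W = −ξ_k ℒ_K(Γ^k_{ij}) dx^i ⊙ dx^j` for the Lie derivative of
the Walker metric along the complete lift of a vector field on the base. -/
theorem lie_completeLift_walker
    (U : Set Pt2) (hUopen : IsOpen U)
    (Γ : Conn) (hΓsmooth : ∀ k i j, ContDiffOn ℝ (⊤ : ℕ∞) (Γ k i j) U)
    (hΓsym : ∀ k i j, ∀ x ∈ U, Γ k i j x = Γ k j i x)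
    (K : Fin 2 → Pt2 → ℝ) (hKsmooth : ∀ i, ContDiffOn ℝ (⊤ : ℕ∞) (K i) U)
    (p : Pt4) (hp : bpt p ∈ U) :
    (∀ i j : Fin 2,
      lieT (completeLift K) (walker Γ) (xIdx i) (xIdx j) p
        = -(∑ k, fib p k * lieConn Γ K k i j (bpt p))) ∧
    (∀ (i : Fin 2) (a : Fin 4),
      lieT (completeLift K) (walker Γ) (ξIdx i) a p = 0 ∧
      lieT (completeLift K) (walker Γ) a (ξIdx i) p = 0) := by
  have hKc : ∀ i, ContDiffAt ℝ (⊤ : ℕ∞) (K i) (bpt p) :=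
    fun i => (hKsmooth i).contDiffAt (hUopen.mem_nhds hp)
  have hΓc : ∀ k i j, ContDiffAt ℝ (⊤ : ℕ∞) (Γ k i j) (bpt p) :=
    fun k i j => (hΓsmooth k i j).contDiffAt (hUopen.mem_nhds hp)
  have dK : ∀ i, DifferentiableAt ℝ (K i) (bpt p) :=
    fun i => (hKc i).differentiableAt (by simp)
  have dΓ : ∀ k i j, DifferentiableAt ℝ (Γ k i j) (bpt p) :=
    fun k i j => (hΓc k i j).differentiableAt (by simp)
  have dpK : ∀ m i, DifferentiableAt ℝ (pd2 m (K i)) (bpt p) :=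
    fun m i => pd2_differentiableAt (hKc i) m
  have hsym : ∀ k, Γ k 1 0 (bpt p) = Γ k 0 1 (bpt p) := fun k => hΓsym k 1 0 _ hp
  have hK2sym : ∀ k, pd2 1 (fun y => pd2 0 (K k) y) (bpt p)
      = pd2 0 (fun y => pd2 1 (K k) y) (bpt p) := fun k => pd2_pd2_symm (hKc k) 1 0
  constructor
  · intro i j
    fin_cases i <;> fin_cases j <;>
    · simp only [Fin.mk_zero, Fin.mk_one, Fin.reduceFinMk, Fin.isValue, xIdx, ξIdx, Matrix.cons_val_zero, Matrix.cons_val_one, Matrix.head_cons,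
      lieT, Fin.sum_univ_four, walker00, walker01, walker02, walker03, walker10, walker11, walker12, walker13, walker20, walker21, walker22, walker23, walker30, walker31, walker32, walker33,
      lift0, lift1, lift2, lift3, pd4_const,
      pd4_entry0 (dΓ 0 0 0) (dΓ 1 0 0), pd4_entry0 (dΓ 0 0 1) (dΓ 1 0 1), pd4_entry0 (dΓ 0 1 0) (dΓ 1 1 0), pd4_entry0 (dΓ 0 1 1) (dΓ 1 1 1), pd4_entry0 (dpK 0 0) (dpK 0 1), pd4_entry0 (dpK 1 0) (dpK 1 1), pd4_comp_bpt0 (dK 0), pd4_comp_bpt0 (dK 1), pd4_entry1 (dΓ 0 0 0) (dΓ 1 0 0), pd4_entry1 (dΓ 0 0 1) (dΓ 1 0 1), pd4_entry1 (dΓ 0 1 0) (dΓ 1 1 0), pd4_entry1 (dΓ 0 1 1) (dΓ 1 1 1), pd4_entry1 (dpK 0 0) (dpK 0 1), pd4_entry1 (dpK 1 0) (dpK 1 1), pd4_comp_bpt1 (dK 0), pd4_comp_bpt1 (dK 1), pd4_entry2 (dΓ 0 0 0) (dΓ 1 0 0), pd4_entry2 (dΓ 0 0 1) (dΓ 1 0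 1), pd4_entry2 (dΓ 0 1 0) (dΓ 1 1 0), pd4_entry2 (dΓ 0 1 1) (dΓ 1 1 1), pd4_entry2 (dpK 0 0) (dpK 0 1), pd4_entry2 (dpK 1 0) (dpK 1 1), pd4_comp_bpt2 (dK 0), pd4_comp_bpt2 (dK 1), pd4_entry3 (dΓ 0 0 0) (dΓ 1 0 0), pd4_entry3 (dΓ 0 0 1) (dΓ 1 0 1), pd4_entry3 (dΓ 0 1 0) (dΓ 1 1 0), pd4_entry3 (dΓ 0 1 1) (dΓ 1 1 1), pd4_entry3 (dpK 0 0) (dpK 0 1), pd4_entry3 (dpK 1 0) (dpK 1 1), pd4_comp_bpt3 (dK 0), pd4_comp_bpt3 (dK 1),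
      lieConn, fib, Fin.sum_univ_two, Matrix.cons_val_zero, Matrix.cons_val_one, Matrix.head_cons]
      try simp only [hsym, hK2sym]
      ring
  · intro i a
    refine ⟨?_, ?_⟩ <;> fin_cases i <;> fin_cases a <;>
    · simp only [Fin.mk_zero, Fin.mk_one, Fin.reduceFinMk, Fin.isValue, xIdx, ξIdx, Matrix.cons_val_zero, Matrix.cons_val_one, Matrix.head_cons,
      lieT, Fin.sum_univ_four, walker00, walker01, walker02, walker03, walker10, walker11, walker12, walker13, walker20, walker21, walker22, walker23, walker30, walker31, walker32, walker33,
      lift0, lift1, lift2, lift3, pd4_const,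
      pd4_entry0 (dΓ 0 0 0) (dΓ 1 0 0), pd4_entry0 (dΓ 0 0 1) (dΓ 1 0 1), pd4_entry0 (dΓ 0 1 0) (dΓ 1 1 0), pd4_entry0 (dΓ 0 1 1) (dΓ 1 1 1), pd4_entry0 (dpK 0 0) (dpK 0 1), pd4_entry0 (dpK 1 0) (dpK 1 1), pd4_comp_bpt0 (dK 0), pd4_comp_bpt0 (dK 1), pd4_entry1 (dΓ 0 0 0) (dΓ 1 0 0), pd4_entry1 (dΓ 0 0 1) (dΓ 1 0 1), pd4_entry1 (dΓ 0 1 0) (dΓ 1 1 0), pd4_entry1 (dΓ 0 1 1) (dΓ 1 1 1), pd4_entry1 (dpK 0 0) (dpK 0 1), pd4_entry1 (dpK 1 0) (dpK 1 1), pd4_comp_bpt1 (dK 0), pd4_comp_bpt1 (dK 1), pd4_entry2 (dΓ 0 0 0) (dΓ 1 0 0), pd4_entry2 (dΓ 0 0 1) (dΓ 1 0 1), pd4_entry2 (dΓ 0 1 0) (dΓ 1 1 0), pd4_entry2 (dΓ 0 1 1) (dΓ 1 1 1), pd4_entry2 (dpK 0 0) (dpK 0 1), pd4_entry2 (dpK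 1 0) (dpK 1 1), pd4_comp_bpt2 (dK 0), pd4_comp_bpt2 (dK 1), pd4_entry3 (dΓ 0 0 0) (dΓ 1 0 0), pd4_entry3 (dΓ 0 0 1) (dΓ 1 0 1), pd4_entry3 (dΓ 0 1 0) (dΓ 1 1 0), pd4_entry3 (dΓ 0 1 1) (dΓ 1 1 1), pd4_entry3 (dpK 0 0) (dpK 0 1), pd4_entry3 (dpK 1 0) (dpK 1 1), pd4_comp_bpt3 (dK 0), pd4_comp_bpt3 (dK 1),
      lieConn, fib, Fin.sum_univ_two, Matrix.cons_val_zero, Matrix.cons_val_one, Matrix.head_cons]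
      try simp only [hsym, hK2sym]
      ring
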